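/- Let (u_θ)_{θ∈I} be a smooth family of model eigenfunctions of H(θ) with eigenvalues σ(θ), and fix θ ∈ I. Define w₀ := −(σ'(θ)/2)(s ∂_s u_θ + t ∂_t u_θ) − σ(θ) ∂_θ u_θ. Then ∫_{ℝ²₊} (2σ'(θ)V_θ² − 2σ(θ)V_θ ∂_θV_θ) w₀ u_θ ds dt + ∫_{ℝ²₊} (σ(θ)∂_θV_θ − σ'(θ)V_θ)² u_θ² ds dt = (σ(θ)²σ''(θ) + σ(θ)³)/2. -/

import Mathlib

/-!
Write `A = s ∂_s u + t ∂_t u` and `W = ∂_θ u`. Differentiating the eigenvalue equation in `θ`,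
and commuting `H(θ)` with the Euler operator (`V_θ²` is homogeneous of degree two), gives
`(H - σ) W = (σ' - 2 V ∂_θV) u` and `(H - σ) A = (2σ - 4 V²) u`. Pairing with `u` and using
Green's identity (both sides satisfy the Neumann condition) yields the Feynman–Hellmann identity
`∫ V ∂_θV u² = σ'/2` and the virial identity `∫ V² u² = σ/2`. Differentiating these once more in
`θ` gives `∫ V² u W = -σ'/4` and `σ'' = 2 ∫ (∂_θV)² u² - 2 ∫ V² u² + 4 ∫ V ∂_θV u W`, while
integrating by parts along the Euler field gives `∫ q u A = -2 ∫ q u²` for quadratic forms `q`.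
Expanding both integrals of the statement in these quantities, the unknown `∫ V ∂_θV u W` cancels.
-/

open Real MeasureTheory Set

noncomputable section

/-- Partial derivative with respect to the first variable. -/
def pd1 (u : ℝ → ℝ → ℝ) : ℝ → ℝ → ℝ := fun s t => deriv (fun x => u x t) s

/-- Partial derivative with respect to the second variable. -/
def pd2 (u : ℝ → ℝ → ℝ) : ℝ → ℝ → ℝ := fun s t => deriv (fun y => u s y) t

/-- The potential `V_θ(s,t) = t cos θ − s sin θ`. -/
def Vpot (θ : ℝ) : ℝ → ℝ → ℝ := fun s t => t * Real.cos θ - s * Real.sin θ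

/-- The operator `H(θ) = −∂_s² − ∂_t² + V_θ²` applied to `u`. -/
def Hop (θ : ℝ) (u : ℝ → ℝ → ℝ) : ℝ → ℝ → ℝ :=
  fun s t => - pd1 (pd1 u) s t - pd2 (pd2 u) s t + (Vpot θ s t)^2 * u s t

/-- Integral over the half-plane `{t > 0}` with respect to `ds dt`. -/
def intHalf (f : ℝ → ℝ → ℝ) : ℝ := ∫ s : ℝ, ∫ t in Set.Ioi (0:ℝ), f s t

/-- Schwartz-class on the closed half-plane: all iterated partial derivatives decay
faster than any power of `|s| + t`. -/
def SchwartzHalf (u : ℝ → ℝ → ℝ) : Prop :=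
  ∀ k l n : ℕ, ∃ C : ℝ, ∀ s t : ℝ, 0 ≤ t →
    |pd1^[k] (pd2^[l] u) s t| ≤ C * (1 + |s| + t) ^ (-(n:ℝ))

/-- A model eigenfunction of `H(θ)` with eigenvalue `σ`: smooth up to the boundary,
Schwartz-class, `L²`-normalized, Neumann boundary condition, and `H(θ)u = σu` on `{t ≥ 0}`. -/
structure IsModelEigen (θ : ℝ) (u : ℝ → ℝ → ℝ) (σ : ℝ) : Prop where
  smooth : ∀ n : ℕ, ContDiff ℝ n (fun p : ℝ × ℝ => u p.1 p.2)
  schwartz : SchwartzHalf u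
  normalized : intHalf (fun s t => (u s t)^2) = 1
  neumann : ∀ s : ℝ, pd2 u s 0 = 0
  eigen : ∀ s t : ℝ, 0 ≤ t → Hop θ u s t = σ * u s t

/-- Partial derivative in the parameter `θ` of a family. -/
def pdθ (u : ℝ → ℝ → ℝ → ℝ) : ℝ → ℝ → ℝ → ℝ := fun θ s t => deriv (fun x => u x s t) θ

/-- A smooth family of model eigenfunctions of `H(θ)` with eigenvalues `σ(θ)`,
parametrized by the open interval `Ioo a b ⊆ (0, π/2)`: the map `(θ,s,t) ↦ u θ s t`
is smooth, all its partial derivatives are Schwartz-class in `(s,t)` locally uniformly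
in `θ`, `σ` is smooth, and each `u θ` is a model eigenfunction of `H(θ)`. -/
structure IsSmoothFamily (a b : ℝ) (u : ℝ → ℝ → ℝ → ℝ) (σ : ℝ → ℝ) : Prop where
  sub : Set.Ioo a b ⊆ Set.Ioo 0 (π/2)
  smooth : ∀ n : ℕ, ContDiffOn ℝ n (fun p : ℝ × ℝ × ℝ => u p.1 p.2.1 p.2.2)
      (Set.Ioo a b ×ˢ (Set.univ : Set (ℝ × ℝ)))
  sigma_smooth : ∀ n : ℕ, ContDiffOn ℝ n σ (Set.Ioo a b)
  schwartz : ∀ θ ∈ Set.Ioo a b, ∀ m k l n : ℕ, ∃ ε > 0, ∃ C : ℝ,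
      ∀ θ' ∈ Set.Ioo a b, |θ' - θ| < ε → ∀ s t : ℝ, 0 ≤ t →
      |pd1^[k] (pd2^[l] (pdθ^[m] u θ')) s t| ≤ C * (1 + |s| + t) ^ (-(n:ℝ))
  eigen : ∀ θ ∈ Set.Ioo a b, IsModelEigen θ (u θ) (σ θ)

open Filter Topology

section PartialDerivatives

lemma hasDerivAt_fderiv_fst {f : ℝ → ℝ → ℝ} {s t : ℝ}
    (hf : DifferentiableAt ℝ (fun p : ℝ × ℝ => f p.1 p.2) (s, t)) :
    HasDerivAt (fun x => f x t) (fderiv ℝ (fun p : ℝ × ℝ => f p.1 p.2) (s, t) (1, 0)) s :=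
  hf.hasFDerivAt.comp_hasDerivAt (f := fun x : ℝ => ((x, t) : ℝ × ℝ)) s
    ((hasDerivAt_id s).prodMk (hasDerivAt_const s t))

lemma hasDerivAt_fderiv_snd {f : ℝ → ℝ → ℝ} {s t : ℝ}
    (hf : DifferentiableAt ℝ (fun p : ℝ × ℝ => f p.1 p.2) (s, t)) :
    HasDerivAt (fun y => f s y) (fderiv ℝ (fun p : ℝ × ℝ => f p.1 p.2) (s, t) (0, 1)) t :=
  hf.hasFDerivAt.comp_hasDerivAt (f := fun y : ℝ => ((s, y) : ℝ × ℝ)) t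
    ((hasDerivAt_const t s).prodMk (hasDerivAt_id t))

lemma pd1_eq_fderiv {f : ℝ → ℝ → ℝ} {s t : ℝ}
    (hf : DifferentiableAt ℝ (fun p : ℝ × ℝ => f p.1 p.2) (s, t)) :
    pd1 f s t = fderiv ℝ (fun p : ℝ × ℝ => f p.1 p.2) (s, t) (1, 0) :=
  (hasDerivAt_fderiv_fst hf).deriv

lemma pd2_eq_fderiv {f : ℝ → ℝ → ℝ} {s t : ℝ}
    (hf : DifferentiableAt ℝ (fun p : ℝ × ℝ => f p.1 p.2) (s, t)) :
    pd2 f s t = fderiv ℝ (fun p : ℝ × ℝ => f p.1 p.2) (s, t) (0, 1) :=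
  (hasDerivAt_fderiv_snd hf).deriv

lemma hasDerivAt_fderiv_apply {E : Type*} [NormedAddCommGroup E] [NormedSpace ℝ E]
    {G : E → ℝ} {c : ℝ → E} {w : E} {r : ℝ}
    (hc : HasDerivAt c w r) (hG : ContDiffAt ℝ 2 G (c r)) (v : E) :
    HasDerivAt (fun r' => fderiv ℝ G (c r') v) (fderiv ℝ (fderiv ℝ G) (c r) w v) r := by
  have hG' : HasFDerivAt (fderiv ℝ G) (fderiv ℝ (fderiv ℝ G) (c r)) (c r) :=
    ((hG.fderiv_right (by norm_num)).differentiableAt one_ne_zero).hasFDerivAt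
  simpa using (hG'.comp_hasDerivAt r hc).clm_apply (hasDerivAt_const r v)

/-- Schwarz's theorem: the mixed partial derivatives of a `C²` function on an open set agree. -/
lemma hasDerivAt_deriv_comm {F : ℝ → ℝ → ℝ} {O : Set (ℝ × ℝ)} (hO : IsOpen O)
    (hF : ContDiffOn ℝ 2 (fun p : ℝ × ℝ => F p.1 p.2) O) {x y : ℝ} (hxy : (x, y) ∈ O) :
    HasDerivAt (fun x' => deriv (fun y' => F x' y') y)
      (deriv (fun y' => deriv (fun x' => F x' y') x) y) x := by
  set G := fun p : ℝ × ℝ => F p.1 p.2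
  have hG : ∀ p ∈ O, ContDiffAt ℝ 2 G p := fun p hp => hF.contDiffAt (hO.mem_nhds hp)
  have hx : ∀ᶠ x' in 𝓝 x, (x', y) ∈ O :=
    (continuous_id.prodMk continuous_const).continuousAt.preimage_mem_nhds (hO.mem_nhds hxy)
  have hy : ∀ᶠ y' in 𝓝 y, (x, y') ∈ O :=
    (continuous_const.prodMk continuous_id).continuousAt.preimage_mem_nhds (hO.mem_nhds hxy)
  have hdx : HasDerivAt (fun x' => fderiv ℝ G (x', y) (0, 1))
      (fderiv ℝ (fderiv ℝ G) (x, y) (1, 0) (0, 1)) x :=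
    hasDerivAt_fderiv_apply ((hasDerivAt_id x).prodMk (hasDerivAt_const x y)) (hG _ hxy) (0, 1)
  have hdy : HasDerivAt (fun y' => fderiv ℝ G (x, y') (1, 0))
      (fderiv ℝ (fderiv ℝ G) (x, y) (0, 1) (1, 0)) y :=
    hasDerivAt_fderiv_apply ((hasDerivAt_const y x).prodMk (hasDerivAt_id y)) (hG _ hxy) (1, 0)
  have hsymm : fderiv ℝ (fderiv ℝ G) (x, y) (1, 0) (0, 1)
      = fderiv ℝ (fderiv ℝ G) (x, y) (0, 1) (1, 0) :=
    (hG _ hxy).isSymmSndFDerivAt (by simp) (1, 0) (0, 1)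
  have hEx : (fun x' => deriv (fun y' => F x' y') y) =ᶠ[𝓝 x]
      (fun x' => fderiv ℝ G (x', y) (0, 1)) := by
    filter_upwards [hx] with x' hx'
    exact pd2_eq_fderiv ((hG _ hx').differentiableAt two_ne_zero)
  have hEy : (fun y' => deriv (fun x' => F x' y') x) =ᶠ[𝓝 y]
      (fun y' => fderiv ℝ G (x, y') (1, 0)) := by
    filter_upwards [hy] with y' hy'
    exact pd1_eq_fderiv ((hG _ hy').differentiableAt two_ne_zero)
  rw [hEy.deriv_eq, hdy.deriv, ← hsymm]
  exact hdx.congr_of_eventuallyEq hEx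

lemma pd1_pd2_comm {f : ℝ → ℝ → ℝ} (hf : ContDiff ℝ 2 (fun p : ℝ × ℝ => f p.1 p.2)) :
    pd1 (pd2 f) = pd2 (pd1 f) := by
  funext s t
  simpa [pd1, pd2] using (hasDerivAt_deriv_comm isOpen_univ hf.contDiffOn (mem_univ (s, t))).deriv

end PartialDerivatives

section Smooth

def Smooth2 (f : ℝ → ℝ → ℝ) : Prop := ∀ n : ℕ, ContDiff ℝ n (fun p : ℝ × ℝ => f p.1 p.2)

variable {f g : ℝ → ℝ → ℝ}

lemma Smooth2.continuous (hf : Smooth2 f) : Continuous (fun p : ℝ × ℝ => f p.1 p.2) :=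
  (hf 0).continuous

lemma Smooth2.differentiableAt (hf : Smooth2 f) (s t : ℝ) :
    DifferentiableAt ℝ (fun p : ℝ × ℝ => f p.1 p.2) (s, t) :=
  ((hf 1).differentiable (by norm_num)).differentiableAt

lemma Smooth2.hasDerivAt_pd1 (hf : Smooth2 f) (s t : ℝ) :
    HasDerivAt (fun x => f x t) (pd1 f s t) s :=
  (hasDerivAt_fderiv_fst (hf.differentiableAt s t)).differentiableAt.hasDerivAt

lemma Smooth2.hasDerivAt_pd2 (hf : Smooth2 f) (s t : ℝ) :
    HasDerivAt (fun y => f s y) (pd2 f s t) t :=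
  (hasDerivAt_fderiv_snd (hf.differentiableAt s t)).differentiableAt.hasDerivAt

lemma Smooth2.pd1 (hf : Smooth2 f) : Smooth2 (_root_.pd1 f) := by
  intro n
  rw [show (fun p : ℝ × ℝ => _root_.pd1 f p.1 p.2)
      = fun p => fderiv ℝ (fun q : ℝ × ℝ => f q.1 q.2) p (1, 0) from
    funext fun p => pd1_eq_fderiv (hf.differentiableAt p.1 p.2)]
  exact ((hf (n + 1)).fderiv_right (by norm_cast)).clm_apply contDiff_const

lemma Smooth2.pd2 (hf : Smooth2 f) : Smooth2 (_root_.pd2 f) := by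
  intro n
  rw [show (fun p : ℝ × ℝ => _root_.pd2 f p.1 p.2)
      = fun p => fderiv ℝ (fun q : ℝ × ℝ => f q.1 q.2) p (0, 1) from
    funext fun p => pd2_eq_fderiv (hf.differentiableAt p.1 p.2)]
  exact ((hf (n + 1)).fderiv_right (by norm_cast)).clm_apply contDiff_const

lemma Smooth2.add (hf : Smooth2 f) (hg : Smooth2 g) : Smooth2 (fun s t => f s t + g s t) :=
  fun n => (hf n).add (hg n)

lemma Smooth2.mul (hf : Smooth2 f) (hg : Smooth2 g) : Smooth2 (fun s t => f s t * g s t) :=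
  fun n => (hf n).mul (hg n)

lemma Smooth2.fst_mul (hf : Smooth2 f) : Smooth2 (fun s t => s * f s t) :=
  fun n => contDiff_fst.mul (hf n)

lemma Smooth2.snd_mul (hf : Smooth2 f) : Smooth2 (fun s t => t * f s t) :=
  fun n => contDiff_snd.mul (hf n)

lemma Smooth2.pd1_pd2_comm (hf : Smooth2 f) :
    _root_.pd1 (_root_.pd2 f) = _root_.pd2 (_root_.pd1 f) :=
  _root_.pd1_pd2_comm (hf 2)

lemma pd1_add (hf : Smooth2 f) (hg : Smooth2 g) :
    pd1 (fun s t => f s t + g s t) = fun s t => pd1 f s t + pd1 g s t :=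
  funext₂ fun s t => ((hf.hasDerivAt_pd1 s t).add (hg.hasDerivAt_pd1 s t)).deriv

lemma pd2_add (hf : Smooth2 f) (hg : Smooth2 g) :
    pd2 (fun s t => f s t + g s t) = fun s t => pd2 f s t + pd2 g s t :=
  funext₂ fun s t => ((hf.hasDerivAt_pd2 s t).add (hg.hasDerivAt_pd2 s t)).deriv

lemma pd1_mul (hf : Smooth2 f) (hg : Smooth2 g) :
    pd1 (fun s t => f s t * g s t) = fun s t => pd1 f s t * g s t + f s t * pd1 g s t :=
  funext₂ fun s t => ((hf.hasDerivAt_pd1 s t).fun_mul (hg.hasDerivAt_pd1 s t)).deriv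

lemma pd2_mul (hf : Smooth2 f) (hg : Smooth2 g) :
    pd2 (fun s t => f s t * g s t) = fun s t => pd2 f s t * g s t + f s t * pd2 g s t :=
  funext₂ fun s t => ((hf.hasDerivAt_pd2 s t).fun_mul (hg.hasDerivAt_pd2 s t)).deriv

lemma pd1_fst_mul (hf : Smooth2 f) :
    pd1 (fun s t => s * f s t) = fun s t => f s t + s * pd1 f s t :=
  funext₂ fun s t => by simpa [pd1] using ((hasDerivAt_id' s).fun_mul (hf.hasDerivAt_pd1 s t)).deriv

lemma pd2_fst_mul (hf : Smooth2 f) :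
    pd2 (fun s t => s * f s t) = fun s t => s * pd2 f s t :=
  funext₂ fun s t => ((hf.hasDerivAt_pd2 s t).const_mul s).deriv

lemma pd1_snd_mul (hf : Smooth2 f) :
    pd1 (fun s t => t * f s t) = fun s t => t * pd1 f s t :=
  funext₂ fun s t => ((hf.hasDerivAt_pd1 s t).const_mul t).deriv

lemma pd2_snd_mul (hf : Smooth2 f) :
    pd2 (fun s t => t * f s t) = fun s t => f s t + t * pd2 f s t :=
  funext₂ fun s t => by simpa [pd2] using ((hasDerivAt_id' t).fun_mul (hf.hasDerivAt_pd2 s t)).deriv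

end Smooth

section Decay

def PolyBounded (g : ℝ → ℝ → ℝ) : Prop :=
  ∃ C : ℝ, ∃ k : ℕ, ∀ s t : ℝ, 0 ≤ t → |g s t| ≤ C * (1 + |s| + t) ^ k

def RapidDecay (f : ℝ → ℝ → ℝ) : Prop :=
  ∀ n : ℕ, ∃ C : ℝ, ∀ s t : ℝ, 0 ≤ t → |f s t| * (1 + |s| + t) ^ n ≤ C

variable {f g : ℝ → ℝ → ℝ}

lemma one_le_one_add_abs_add {s t : ℝ} (ht : 0 ≤ t) : 1 ≤ 1 + |s| + t := by
  linarith [abs_nonneg s]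

lemma one_add_sq_mul_one_add_sq_le {s t : ℝ} (ht : 0 ≤ t) :
    (1 + s ^ 2) * (1 + t ^ 2) ≤ (1 + |s| + t) ^ 4 := by
  have h₁ : 1 + s ^ 2 ≤ (1 + |s| + t) ^ 2 := by nlinarith [abs_nonneg s, sq_abs s]
  have h₂ : 1 + t ^ 2 ≤ (1 + |s| + t) ^ 2 := by nlinarith [abs_nonneg s]
  calc (1 + s ^ 2) * (1 + t ^ 2) ≤ (1 + |s| + t) ^ 2 * (1 + |s| + t) ^ 2 :=
        mul_le_mul h₁ h₂ (by positivity) (by positivity)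
    _ = (1 + |s| + t) ^ 4 := by ring

lemma inv_pow_four_le {s t : ℝ} (ht : 0 ≤ t) :
    ((1 + |s| + t) ^ 4)⁻¹ ≤ (1 + s ^ 2)⁻¹ * (1 + t ^ 2)⁻¹ := by
  rw [← mul_inv]
  exact inv_anti₀ (by positivity) (one_add_sq_mul_one_add_sq_le ht)

lemma PolyBounded.exists_nonneg (hg : PolyBounded g) : ∃ C : ℝ, 0 ≤ C ∧ ∃ k : ℕ,
    ∀ s t : ℝ, 0 ≤ t → |g s t| ≤ C * (1 + |s| + t) ^ k := by
  obtain ⟨C, k, hC⟩ := hg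
  exact ⟨C, by simpa using (abs_nonneg _).trans (hC 0 0 le_rfl), k, hC⟩

lemma PolyBounded.add (hf : PolyBounded f) (hg : PolyBounded g) :
    PolyBounded (fun s t => f s t + g s t) := by
  obtain ⟨C₁, hC₁, k₁, h₁⟩ := hf.exists_nonneg
  obtain ⟨C₂, hC₂, k₂, h₂⟩ := hg.exists_nonneg
  refine ⟨C₁ + C₂, k₁ + k₂, fun s t ht => ?_⟩
  have hX := one_le_one_add_abs_add (s := s) ht
  calc |f s t + g s t| ≤ C₁ * (1 + |s| + t) ^ k₁ + C₂ * (1 + |s| + t) ^ k₂ :=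
        (abs_add_le _ _).trans (add_le_add (h₁ s t ht) (h₂ s t ht))
    _ ≤ C₁ * (1 + |s| + t) ^ (k₁ + k₂) + C₂ * (1 + |s| + t) ^ (k₁ + k₂) := by
        gcongr <;> first | exact hX | omega
    _ = (C₁ + C₂) * (1 + |s| + t) ^ (k₁ + k₂) := by ring

lemma PolyBounded.mul (hf : PolyBounded f) (hg : PolyBounded g) :
    PolyBounded (fun s t => f s t * g s t) := by
  obtain ⟨C₁, hC₁, k₁, h₁⟩ := hf.exists_nonneg
  obtain ⟨C₂, k₂, h₂⟩ := hg
  refine ⟨C₁ * C₂, k₁ + k₂, fun s t ht => ?_⟩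
  rw [abs_mul, pow_add, mul_mul_mul_comm]
  exact mul_le_mul (h₁ s t ht) (h₂ s t ht) (abs_nonneg _) (by positivity)

lemma PolyBounded.pow (hf : PolyBounded f) (n : ℕ) : PolyBounded (fun s t => f s t ^ n) := by
  induction n with
  | zero => exact ⟨1, 0, fun _ _ _ => by simp⟩
  | succ n ih => simpa only [pow_succ] using ih.mul hf

lemma polyBounded_const (c : ℝ) : PolyBounded (fun _ _ => c) :=
  ⟨|c|, 0, fun _ _ _ => by simp⟩

lemma polyBounded_fst : PolyBounded (fun s _ => s) :=
  ⟨1, 1, fun s t ht => by simp only [pow_one, one_mul]; linarith⟩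

lemma polyBounded_snd : PolyBounded (fun _ t => t) :=
  ⟨1, 1, fun s t ht => by rw [abs_of_nonneg ht]; linarith [abs_nonneg s]⟩

lemma RapidDecay.polyBounded_mul (hg : PolyBounded g) (hf : RapidDecay f) :
    RapidDecay (fun s t => g s t * f s t) := by
  obtain ⟨C, hC, k, hg⟩ := hg.exists_nonneg
  intro n
  obtain ⟨D, hD⟩ := hf (n + k)
  refine ⟨C * D, fun s t ht => ?_⟩
  calc |g s t * f s t| * (1 + |s| + t) ^ n
      ≤ C * (1 + |s| + t) ^ k * (|f s t| * (1 + |s| + t) ^ n) := by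
        rw [abs_mul, mul_assoc]; gcongr; exact hg s t ht
    _ = C * (|f s t| * (1 + |s| + t) ^ (n + k)) := by ring
    _ ≤ C * D := by gcongr; exact hD s t ht

lemma RapidDecay.polyBounded (hf : RapidDecay f) : PolyBounded f := by
  obtain ⟨C, hC⟩ := hf 0
  exact ⟨C, 0, fun s t ht => by simpa using hC s t ht⟩

lemma RapidDecay.mul (hf : RapidDecay f) (hg : RapidDecay g) :
    RapidDecay (fun s t => f s t * g s t) :=
  hg.polyBounded_mul hf.polyBounded

lemma RapidDecay.add (hf : RapidDecay f) (hg : RapidDecay g) :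
    RapidDecay (fun s t => f s t + g s t) := by
  intro n
  obtain ⟨C₁, h₁⟩ := hf n
  obtain ⟨C₂, h₂⟩ := hg n
  refine ⟨C₁ + C₂, fun s t ht => ?_⟩
  calc |f s t + g s t| * (1 + |s| + t) ^ n
      ≤ |f s t| * (1 + |s| + t) ^ n + |g s t| * (1 + |s| + t) ^ n := by
        rw [← add_mul]; gcongr; exact abs_add_le _ _
    _ ≤ C₁ + C₂ := add_le_add (h₁ s t ht) (h₂ s t ht)

lemma RapidDecay.congr (hf : RapidDecay f) (h : ∀ s t, 0 ≤ t → g s t = f s t) :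
    RapidDecay g := by
  intro n
  obtain ⟨C, hC⟩ := hf n
  exact ⟨C, fun s t ht => h s t ht ▸ hC s t ht⟩

lemma RapidDecay.exists_le (hf : RapidDecay f) :
    ∃ C : ℝ, ∀ s t : ℝ, 0 ≤ t → |f s t| ≤ C * ((1 + s ^ 2)⁻¹ * (1 + t ^ 2)⁻¹) := by
  obtain ⟨C, hC⟩ := hf 4
  have hC₀ : 0 ≤ C := le_trans (by positivity) (hC 0 0 le_rfl)
  refine ⟨C, fun s t ht => ?_⟩
  have hX : 0 < (1 + |s| + t) ^ 4 := by positivity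
  calc |f s t| ≤ C * ((1 + |s| + t) ^ 4)⁻¹ := by
        rw [← div_eq_mul_inv, le_div_iff₀ hX]; exact hC s t ht
    _ ≤ C * ((1 + s ^ 2)⁻¹ * (1 + t ^ 2)⁻¹) := by gcongr; exact inv_pow_four_le ht

lemma SchwartzHalf.rapidDecay {u : ℝ → ℝ → ℝ} (hu : SchwartzHalf u) (k l : ℕ) :
    RapidDecay (pd1^[k] (pd2^[l] u)) := by
  intro n
  obtain ⟨C, hC⟩ := hu k l n
  refine ⟨C, fun s t ht => ?_⟩
  have hX : 0 < (1 + |s| + t) ^ n := by positivity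
  have := hC s t ht
  rwa [Real.rpow_neg (by positivity), Real.rpow_natCast, ← div_eq_mul_inv, le_div_iff₀ hX] at this

end Decay

section HalfPlaneIntegral

def halfPlaneVolume : Measure (ℝ × ℝ) := (volume : Measure ℝ).prod (volume.restrict (Ioi 0))

variable {f g : ℝ → ℝ → ℝ}

lemma ae_halfPlaneVolume_snd_pos : ∀ᵐ p : ℝ × ℝ ∂halfPlaneVolume, 0 < p.2 := by
  have hset : {p : ℝ × ℝ | ¬ (0 < p.2)} = (univ : Set ℝ) ×ˢ Iic (0 : ℝ) := by
    ext p; simp [not_lt]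
  rw [ae_iff, hset, halfPlaneVolume, Measure.prod_prod]
  simp [Measure.restrict_apply, Iic_inter_Ioi]

lemma integrable_inv_sq_mul_inv_sq :
    Integrable (fun p : ℝ × ℝ => (1 + p.1 ^ 2)⁻¹ * (1 + p.2 ^ 2)⁻¹) halfPlaneVolume :=
  integrable_inv_one_add_sq.mul_prod integrable_inv_one_add_sq.restrict

lemma integrable_of_le_inv_sq {C : ℝ} (hc : Continuous (fun p : ℝ × ℝ => f p.1 p.2))
    (hle : ∀ s t : ℝ, 0 ≤ t → |f s t| ≤ C * ((1 + s ^ 2)⁻¹ * (1 + t ^ 2)⁻¹)) :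
    Integrable (fun p : ℝ × ℝ => f p.1 p.2) halfPlaneVolume := by
  refine (integrable_inv_sq_mul_inv_sq.const_mul C).mono' hc.aestronglyMeasurable ?_
  filter_upwards [ae_halfPlaneVolume_snd_pos] with p hp
  exact hle p.1 p.2 hp.le

lemma RapidDecay.integrable (hf : RapidDecay f) (hc : Continuous (fun p : ℝ × ℝ => f p.1 p.2)) :
    Integrable (fun p : ℝ × ℝ => f p.1 p.2) halfPlaneVolume :=
  integrable_of_le_inv_sq hc hf.exists_le.choose_spec

lemma intHalf_eq_integral (hf : Integrable (fun p : ℝ × ℝ => f p.1 p.2) halfPlaneVolume) :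
    intHalf f = ∫ p : ℝ × ℝ, f p.1 p.2 ∂halfPlaneVolume :=
  integral_integral hf

lemma intHalf_eq_integral_swap (hf : Integrable (fun p : ℝ × ℝ => f p.1 p.2) halfPlaneVolume) :
    intHalf f = ∫ t in Ioi 0, ∫ s, f s t :=
  integral_integral_swap hf

lemma intHalf_congr (h : ∀ s t, 0 < t → f s t = g s t) : intHalf f = intHalf g :=
  integral_congr_ae (Eventually.of_forall fun s =>
    setIntegral_congr_fun measurableSet_Ioi fun t ht => h s t ht)

lemma intHalf_add (hf : Integrable (fun p : ℝ × ℝ => f p.1 p.2) halfPlaneVolume)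
    (hg : Integrable (fun p : ℝ × ℝ => g p.1 p.2) halfPlaneVolume) :
    intHalf (fun s t => f s t + g s t) = intHalf f + intHalf g := by
  rw [intHalf_eq_integral (hf.add hg), intHalf_eq_integral hf, intHalf_eq_integral hg]
  exact integral_add hf hg

lemma intHalf_sub (hf : Integrable (fun p : ℝ × ℝ => f p.1 p.2) halfPlaneVolume)
    (hg : Integrable (fun p : ℝ × ℝ => g p.1 p.2) halfPlaneVolume) :
    intHalf (fun s t => f s t - g s t) = intHalf f - intHalf g := by
  rw [intHalf_eq_integral (hf.sub hg), intHalf_eq_integral hf, intHalf_eq_integral hg]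
  exact integral_sub hf hg

lemma intHalf_const_mul (c : ℝ) (f : ℝ → ℝ → ℝ) :
    intHalf (fun s t => c * f s t) = c * intHalf f := by
  simp only [intHalf, integral_const_mul]

end HalfPlaneIntegral

section IntegrationByParts

variable {f g h : ℝ → ℝ → ℝ}

lemma RapidDecay.integrable_slice_fst (hd : RapidDecay h)
    (hc : Continuous (fun p : ℝ × ℝ => h p.1 p.2)) {t : ℝ} (ht : 0 ≤ t) :
    Integrable (fun s => h s t) := by
  obtain ⟨C, hC⟩ := hd.exists_le
  refine (integrable_inv_one_add_sq.mul_const (C * (1 + t ^ 2)⁻¹)).mono'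
    (hc.comp (continuous_id.prodMk continuous_const)).aestronglyMeasurable
    (Eventually.of_forall fun s => ?_)
  simpa [mul_comm, mul_left_comm, mul_assoc] using hC s t ht

lemma RapidDecay.integrableOn_slice_snd (hd : RapidDecay h)
    (hc : Continuous (fun p : ℝ × ℝ => h p.1 p.2)) (s : ℝ) :
    IntegrableOn (fun t => h s t) (Ioi 0) := by
  obtain ⟨C, hC⟩ := hd.exists_le
  refine ((integrable_inv_one_add_sq.const_mul (C * (1 + s ^ 2)⁻¹)).restrict).mono'
    (hc.comp (continuous_const.prodMk continuous_id)).aestronglyMeasurable.restrict ?_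
  rw [ae_restrict_iff' measurableSet_Ioi]
  refine Eventually.of_forall fun t ht => ?_
  simpa [mul_assoc] using hC s t (le_of_lt ht)

lemma RapidDecay.tendsto_slice_snd (hd : RapidDecay h) (s : ℝ) :
    Tendsto (fun t => h s t) atTop (𝓝 0) := by
  obtain ⟨C, hC⟩ := hd.exists_le
  have hlim : Tendsto (fun t : ℝ => C * ((1 + s ^ 2)⁻¹ * (1 + t ^ 2)⁻¹)) atTop (𝓝 0) := by
    simpa [mul_assoc] using (tendsto_inv_atTop_zero.comp (tendsto_atTop_add_const_left _ 1
      (tendsto_pow_atTop two_ne_zero))).const_mul (C * (1 + s ^ 2)⁻¹)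
  exact squeeze_zero_norm' ((eventually_ge_atTop 0).mono fun t ht => hC s t ht) hlim

lemma intHalf_mul_pd1 (hf : Smooth2 f) (hg : Smooth2 g)
    (h₁ : RapidDecay (fun s t => pd1 f s t * g s t))
    (h₂ : RapidDecay (fun s t => f s t * pd1 g s t))
    (h₃ : RapidDecay (fun s t => f s t * g s t)) :
    intHalf (fun s t => f s t * pd1 g s t) = - intHalf (fun s t => pd1 f s t * g s t) := by
  have c₁ : Continuous (fun p : ℝ × ℝ => pd1 f p.1 p.2 * g p.1 p.2) :=
    hf.pd1.continuous.mul hg.continuous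
  have c₂ : Continuous (fun p : ℝ × ℝ => f p.1 p.2 * pd1 g p.1 p.2) :=
    hf.continuous.mul hg.pd1.continuous
  rw [intHalf_eq_integral_swap (h₂.integrable c₂), intHalf_eq_integral_swap (h₁.integrable c₁),
    ← integral_neg]
  refine setIntegral_congr_fun measurableSet_Ioi fun t ht => ?_
  simpa using integral_mul_deriv_eq_deriv_mul_of_integrable
    (fun s _ => hf.hasDerivAt_pd1 s t) (fun s _ => hg.hasDerivAt_pd1 s t)
    (h₂.integrable_slice_fst c₂ (le_of_lt ht)) (h₁.integrable_slice_fst c₁ (le_of_lt ht))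
    (h₃.integrable_slice_fst (hf.continuous.mul hg.continuous) (le_of_lt ht))

lemma intHalf_mul_pd2 (hf : Smooth2 f) (hg : Smooth2 g)
    (h₁ : RapidDecay (fun s t => pd2 f s t * g s t))
    (h₂ : RapidDecay (fun s t => f s t * pd2 g s t))
    (h₃ : RapidDecay (fun s t => f s t * g s t)) (hb : ∀ s, f s 0 * g s 0 = 0) :
    intHalf (fun s t => f s t * pd2 g s t) = - intHalf (fun s t => pd2 f s t * g s t) := by
  have c₁ : Continuous (fun p : ℝ × ℝ => pd2 f p.1 p.2 * g p.1 p.2) :=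
    hf.pd2.continuous.mul hg.continuous
  have c₂ : Continuous (fun p : ℝ × ℝ => f p.1 p.2 * pd2 g p.1 p.2) :=
    hf.continuous.mul hg.pd2.continuous
  rw [intHalf, intHalf, ← integral_neg]
  refine integral_congr_ae (Eventually.of_forall fun s => ?_)
  have hslice : Continuous (fun t => f s t * g s t) :=
    (hf.continuous.mul hg.continuous).comp (continuous_const.prodMk continuous_id)
  have h0 : Tendsto (fun t => f s t * g s t) (𝓝[>] 0) (𝓝 0) := by
    simpa [hb s] using hslice.continuousAt.tendsto.mono_left (nhdsWithin_le_nhds (a := 0))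
  simpa using integral_Ioi_mul_deriv_eq_deriv_mul
    (fun t _ => hf.hasDerivAt_pd2 s t) (fun t _ => hg.hasDerivAt_pd2 s t)
    (h₂.integrableOn_slice_snd c₂ s) (h₁.integrableOn_slice_snd c₁ s) h0 (h₃.tendsto_slice_snd s)

end IntegrationByParts

section Potential

def dVpot (θ : ℝ) : ℝ → ℝ → ℝ := fun s t => - t * sin θ - s * cos θ

lemma abs_Vpot_le (θ : ℝ) {s t : ℝ} (ht : 0 ≤ t) : |Vpot θ s t| ≤ 1 + |s| + t := by
  calc |t * cos θ - s * sin θ| ≤ |t| * |cos θ| + |s| * |sin θ| := by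
        rw [← abs_mul, ← abs_mul]; exact abs_sub _ _
    _ ≤ |t| * 1 + |s| * 1 := by gcongr <;> first | exact abs_cos_le_one θ | exact abs_sin_le_one θ
    _ ≤ 1 + |s| + t := by rw [abs_of_nonneg ht]; linarith

lemma polyBounded_Vpot (θ : ℝ) : PolyBounded (Vpot θ) :=
  ⟨1, 1, fun _ _ ht => by simpa using abs_Vpot_le θ ht⟩

lemma continuous_Vpot (θ : ℝ) : Continuous (fun p : ℝ × ℝ => Vpot θ p.1 p.2) := by
  unfold Vpot; fun_prop

lemma abs_dVpot_le (θ : ℝ) {s t : ℝ} (ht : 0 ≤ t) : |dVpot θ s t| ≤ 1 + |s| + t := by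
  calc |-t * sin θ - s * cos θ| ≤ |t| * |sin θ| + |s| * |cos θ| := by
        rw [← abs_mul, ← abs_mul, neg_mul, ← abs_neg (t * sin θ)]; exact abs_sub _ _
    _ ≤ |t| * 1 + |s| * 1 := by gcongr <;> first | exact abs_cos_le_one θ | exact abs_sin_le_one θ
    _ ≤ 1 + |s| + t := by rw [abs_of_nonneg ht]; linarith

lemma polyBounded_dVpot (θ : ℝ) : PolyBounded (dVpot θ) :=
  ⟨1, 1, fun _ _ ht => by simpa using abs_dVpot_le θ ht⟩

lemma continuous_dVpot (θ : ℝ) : Continuous (fun p : ℝ × ℝ => dVpot θ p.1 p.2) := by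
  unfold dVpot; fun_prop

lemma hasDerivAt_Vpot_fst (θ t s : ℝ) : HasDerivAt (fun x => Vpot θ x t) (-sin θ) s := by
  simpa [Vpot] using ((hasDerivAt_id s).mul_const (sin θ)).const_sub (t * cos θ)

lemma hasDerivAt_Vpot_snd (θ s t : ℝ) : HasDerivAt (fun y => Vpot θ s y) (cos θ) t := by
  simpa [Vpot] using ((hasDerivAt_id t).mul_const (cos θ)).sub_const (s * sin θ)

lemma hasDerivAt_Vpot (s t x : ℝ) : HasDerivAt (fun y => Vpot y s t) (dVpot x s t) x := by
  show HasDerivAt (fun y => t * cos y - s * sin y) _ x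
  exact (((hasDerivAt_cos x).const_mul t).fun_sub ((hasDerivAt_sin x).const_mul s)).congr_deriv
    (by simp only [dVpot]; ring)

lemma hasDerivAt_dVpot (s t x : ℝ) : HasDerivAt (fun y => dVpot y s t) (-Vpot x s t) x := by
  show HasDerivAt (fun y => -t * sin y - s * cos y) _ x
  exact (((hasDerivAt_sin x).const_mul (-t)).fun_sub ((hasDerivAt_cos x).const_mul s)).congr_deriv
    (by simp only [Vpot]; ring)

end Potential

section Green

variable {f g : ℝ → ℝ → ℝ}

/-- The regularity and decay under which `Hop θ` is symmetric on the half-plane. -/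
structure Admissible (f : ℝ → ℝ → ℝ) : Prop where
  smooth : Smooth2 f
  decay : RapidDecay f
  decay_pd1 : RapidDecay (pd1 f)
  decay_pd2 : RapidDecay (pd2 f)
  decay_pd1_pd1 : RapidDecay (pd1 (pd1 f))
  decay_pd2_pd2 : RapidDecay (pd2 (pd2 f))

lemma Admissible.add (hf : Admissible f) (hg : Admissible g) :
    Admissible (fun s t => f s t + g s t) where
  smooth := hf.smooth.add hg.smooth
  decay := hf.decay.add hg.decay
  decay_pd1 := by rw [pd1_add hf.smooth hg.smooth]; exact hf.decay_pd1.add hg.decay_pd1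
  decay_pd2 := by rw [pd2_add hf.smooth hg.smooth]; exact hf.decay_pd2.add hg.decay_pd2
  decay_pd1_pd1 := by
    rw [pd1_add hf.smooth hg.smooth, pd1_add hf.smooth.pd1 hg.smooth.pd1]
    exact hf.decay_pd1_pd1.add hg.decay_pd1_pd1
  decay_pd2_pd2 := by
    rw [pd2_add hf.smooth hg.smooth, pd2_add hf.smooth.pd2 hg.smooth.pd2]
    exact hf.decay_pd2_pd2.add hg.decay_pd2_pd2

lemma Admissible.fst_mul (hf : Admissible f) : Admissible (fun s t => s * f s t) where
  smooth := hf.smooth.fst_mul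
  decay := hf.decay.polyBounded_mul polyBounded_fst
  decay_pd1 := by
    rw [pd1_fst_mul hf.smooth]
    exact hf.decay.add (hf.decay_pd1.polyBounded_mul polyBounded_fst)
  decay_pd2 := by
    rw [pd2_fst_mul hf.smooth]
    exact hf.decay_pd2.polyBounded_mul polyBounded_fst
  decay_pd1_pd1 := by
    rw [pd1_fst_mul hf.smooth, pd1_add hf.smooth hf.smooth.pd1.fst_mul, pd1_fst_mul hf.smooth.pd1]
    exact hf.decay_pd1.add (hf.decay_pd1.add (hf.decay_pd1_pd1.polyBounded_mul polyBounded_fst))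
  decay_pd2_pd2 := by
    rw [pd2_fst_mul hf.smooth, pd2_fst_mul hf.smooth.pd2]
    exact hf.decay_pd2_pd2.polyBounded_mul polyBounded_fst

lemma Admissible.snd_mul (hf : Admissible f) : Admissible (fun s t => t * f s t) where
  smooth := hf.smooth.snd_mul
  decay := hf.decay.polyBounded_mul polyBounded_snd
  decay_pd1 := by
    rw [pd1_snd_mul hf.smooth]
    exact hf.decay_pd1.polyBounded_mul polyBounded_snd
  decay_pd2 := by
    rw [pd2_snd_mul hf.smooth]
    exact hf.decay.add (hf.decay_pd2.polyBounded_mul polyBounded_snd)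
  decay_pd1_pd1 := by
    rw [pd1_snd_mul hf.smooth, pd1_snd_mul hf.smooth.pd1]
    exact hf.decay_pd1_pd1.polyBounded_mul polyBounded_snd
  decay_pd2_pd2 := by
    rw [pd2_snd_mul hf.smooth, pd2_add hf.smooth hf.smooth.pd2.snd_mul, pd2_snd_mul hf.smooth.pd2]
    exact hf.decay_pd2.add (hf.decay_pd2.add (hf.decay_pd2_pd2.polyBounded_mul polyBounded_snd))

lemma Admissible.integrable_mul (hf : Admissible f) (hg : Admissible g) {w : ℝ → ℝ → ℝ}
    (hw : Continuous (fun p : ℝ × ℝ => w p.1 p.2)) (hwb : PolyBounded w) :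
    Integrable (fun p : ℝ × ℝ => w p.1 p.2 * (f p.1 p.2 * g p.1 p.2)) halfPlaneVolume :=
  ((hf.decay.mul hg.decay).polyBounded_mul hwb).integrable
    (hw.mul (hf.smooth.continuous.mul hg.smooth.continuous))

lemma Admissible.integrable_mul_sq (hf : Admissible f) {w : ℝ → ℝ → ℝ}
    (hw : Continuous (fun p : ℝ × ℝ => w p.1 p.2)) (hwb : PolyBounded w) :
    Integrable (fun p : ℝ × ℝ => w p.1 p.2 * f p.1 p.2 ^ 2) halfPlaneVolume := by
  simpa only [sq] using hf.integrable_mul hf hw hwb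

lemma Admissible.integrable_sq (hf : Admissible f) :
    Integrable (fun p : ℝ × ℝ => f p.1 p.2 ^ 2) halfPlaneVolume := by
  simpa using hf.integrable_mul_sq continuous_const (polyBounded_const 1)

lemma Admissible.continuous_hop (hf : Admissible f) (θ : ℝ) :
    Continuous (fun p : ℝ × ℝ => Hop θ f p.1 p.2) := by
  have := hf.smooth.pd1.pd1.continuous
  have := hf.smooth.pd2.pd2.continuous
  have := hf.smooth.continuous
  have := continuous_Vpot θ
  unfold Hop; fun_prop

lemma Admissible.rapidDecay_hop (hf : Admissible f) (θ : ℝ) : RapidDecay (Hop θ f) :=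
  ((hf.decay_pd1_pd1.polyBounded_mul (polyBounded_const (-1))).add
    ((hf.decay_pd2_pd2.polyBounded_mul (polyBounded_const (-1))).add
      (hf.decay.polyBounded_mul ((polyBounded_Vpot θ).mul (polyBounded_Vpot θ))))).congr
    fun s t _ => by simp only [Hop]; ring

lemma intHalf_pd1_pd1_mul_comm (hf : Admissible f) (hg : Admissible g) :
    intHalf (fun s t => pd1 (pd1 f) s t * g s t)
      = intHalf (fun s t => f s t * pd1 (pd1 g) s t) := by
  rw [intHalf_mul_pd1 hf.smooth hg.smooth.pd1 (hf.decay_pd1.mul hg.decay_pd1)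
      (hf.decay.mul hg.decay_pd1_pd1) (hf.decay.mul hg.decay_pd1),
    intHalf_mul_pd1 hf.smooth.pd1 hg.smooth (hf.decay_pd1_pd1.mul hg.decay)
      (hf.decay_pd1.mul hg.decay_pd1) (hf.decay_pd1.mul hg.decay), neg_neg]

lemma intHalf_pd2_pd2_mul_comm (hf : Admissible f) (hg : Admissible g)
    (hfN : ∀ s, pd2 f s 0 = 0) (hgN : ∀ s, pd2 g s 0 = 0) :
    intHalf (fun s t => pd2 (pd2 f) s t * g s t)
      = intHalf (fun s t => f s t * pd2 (pd2 g) s t) := by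
  rw [intHalf_mul_pd2 hf.smooth hg.smooth.pd2 (hf.decay_pd2.mul hg.decay_pd2)
      (hf.decay.mul hg.decay_pd2_pd2) (hf.decay.mul hg.decay_pd2) (fun s => by rw [hgN, mul_zero]),
    intHalf_mul_pd2 hf.smooth.pd2 hg.smooth (hf.decay_pd2_pd2.mul hg.decay)
      (hf.decay_pd2.mul hg.decay_pd2) (hf.decay_pd2.mul hg.decay) (fun s => by rw [hfN, zero_mul]),
    neg_neg]

lemma intHalf_hop_mul_comm (θ : ℝ) (hf : Admissible f) (hg : Admissible g)
    (hfN : ∀ s, pd2 f s 0 = 0) (hgN : ∀ s, pd2 g s 0 = 0) :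
    intHalf (fun s t => Hop θ f s t * g s t) = intHalf (fun s t => f s t * Hop θ g s t) := by
  have hV := continuous_Vpot θ
  have iV := hf.integrable_mul hg (w := fun s t => Vpot θ s t ^ 2) (by fun_prop)
    ((polyBounded_Vpot θ).pow 2)
  have i₁ := (hf.decay_pd1_pd1.mul hg.decay).integrable
    (hf.smooth.pd1.pd1.continuous.mul hg.smooth.continuous)
  have i₂ := (hf.decay_pd2_pd2.mul hg.decay).integrable
    (hf.smooth.pd2.pd2.continuous.mul hg.smooth.continuous)
  have j₁ := (hf.decay.mul hg.decay_pd1_pd1).integrable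
    (hf.smooth.continuous.mul hg.smooth.pd1.pd1.continuous)
  have j₂ := (hf.decay.mul hg.decay_pd2_pd2).integrable
    (hf.smooth.continuous.mul hg.smooth.pd2.pd2.continuous)
  calc intHalf (fun s t => Hop θ f s t * g s t)
      = intHalf (fun s t => Vpot θ s t ^ 2 * (f s t * g s t) - pd1 (pd1 f) s t * g s t
          - pd2 (pd2 f) s t * g s t) := intHalf_congr fun s t _ => by simp only [Hop]; ring
    _ = intHalf (fun s t => Vpot θ s t ^ 2 * (f s t * g s t) - f s t * pd1 (pd1 g) s t
          - f s t * pd2 (pd2 g) s t) := by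
        simp (disch := fun_prop) only [intHalf_sub]
        rw [intHalf_pd1_pd1_mul_comm hf hg, intHalf_pd2_pd2_mul_comm hf hg hfN hgN]
    _ = intHalf (fun s t => f s t * Hop θ g s t) :=
        intHalf_congr fun s t _ => by simp only [Hop]; ring

end Green

section ModelEigenfunction

variable {θ σ₀ : ℝ} {U : ℝ → ℝ → ℝ}

lemma SchwartzHalf.admissible (hU : SchwartzHalf U) (hs : Smooth2 U) : Admissible U where
  smooth := hs
  decay := by simpa using hU.rapidDecay 0 0
  decay_pd1 := by simpa using hU.rapidDecay 1 0
  decay_pd2 := by simpa using hU.rapidDecay 0 1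
  decay_pd1_pd1 := by simpa using hU.rapidDecay 2 0
  decay_pd2_pd2 := by simpa using hU.rapidDecay 0 2

lemma SchwartzHalf.admissible_pd1 (hU : SchwartzHalf U) (hs : Smooth2 U) : Admissible (pd1 U) where
  smooth := hs.pd1
  decay := by simpa using hU.rapidDecay 1 0
  decay_pd1 := by simpa using hU.rapidDecay 2 0
  decay_pd2 := by rw [← hs.pd1_pd2_comm]; simpa using hU.rapidDecay 1 1
  decay_pd1_pd1 := by simpa using hU.rapidDecay 3 0
  decay_pd2_pd2 := by
    rw [← hs.pd1_pd2_comm, ← hs.pd2.pd1_pd2_comm]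
    simpa using hU.rapidDecay 1 2

lemma SchwartzHalf.admissible_pd2 (hU : SchwartzHalf U) (hs : Smooth2 U) : Admissible (pd2 U) where
  smooth := hs.pd2
  decay := by simpa using hU.rapidDecay 0 1
  decay_pd1 := by simpa using hU.rapidDecay 1 1
  decay_pd2 := by simpa using hU.rapidDecay 0 2
  decay_pd1_pd1 := by simpa using hU.rapidDecay 2 1
  decay_pd2_pd2 := by simpa using hU.rapidDecay 0 3

lemma IsModelEigen.intHalf_mul_eq_zero (hU : IsModelEigen θ U σ₀) {g r : ℝ → ℝ → ℝ}
    (hg : Admissible g) (hgN : ∀ s, pd2 g s 0 = 0)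
    (hr : ∀ s t, 0 ≤ t → Hop θ g s t = σ₀ * g s t + r s t) :
    intHalf (fun s t => r s t * U s t) = 0 := by
  have hUa := hU.schwartz.admissible hU.smooth
  have iH := ((hg.rapidDecay_hop θ).mul hUa.decay).integrable
    ((hg.continuous_hop θ).mul hUa.smooth.continuous)
  have iU := (hg.decay.mul hUa.decay).integrable (hg.smooth.continuous.mul hUa.smooth.continuous)
  calc intHalf (fun s t => r s t * U s t)
      = intHalf (fun s t => Hop θ g s t * U s t - σ₀ * (g s t * U s t)) :=
        intHalf_congr fun s t ht => by rw [hr s t ht.le]; ring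
    _ = intHalf (fun s t => g s t * Hop θ U s t) - σ₀ * intHalf (fun s t => g s t * U s t) := by
        rw [intHalf_sub iH (iU.const_mul σ₀), intHalf_const_mul,
          intHalf_hop_mul_comm θ hg hUa hgN hU.neumann]
    _ = 0 := by
        rw [intHalf_congr fun s t ht => by rw [hU.eigen s t ht.le, mul_left_comm],
          intHalf_const_mul, sub_self]

/-- `-(1/2) • eulerOp U` is the paper's `∂_ρ|_{ρ=1} U(ρ^{-1/2}s, ρ^{-1/2}t)`. -/
def eulerOp (U : ℝ → ℝ → ℝ) : ℝ → ℝ → ℝ := fun s t => s * pd1 U s t + t * pd2 U s t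

lemma SchwartzHalf.admissible_eulerOp (hU : SchwartzHalf U) (hs : Smooth2 U) :
    Admissible (eulerOp U) :=
  (hU.admissible_pd1 hs).fst_mul.add (hU.admissible_pd2 hs).snd_mul

lemma pd2_eulerOp_of_neumann (hs : Smooth2 U) (hN : ∀ s, pd2 U s 0 = 0) (s : ℝ) :
    pd2 (eulerOp U) s 0 = 0 := by
  have h₁ : pd2 (pd1 U) s 0 = 0 := by
    rw [← hs.pd1_pd2_comm, pd1, funext hN, deriv_const]
  unfold eulerOp
  simp [pd2_add hs.pd1.fst_mul hs.pd2.snd_mul, pd2_fst_mul hs.pd1, pd2_snd_mul hs.pd2,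
    h₁, hN s]

lemma eulerOp_congr {f g : ℝ → ℝ → ℝ} (h : ∀ s t, 0 ≤ t → f s t = g s t) {s t : ℝ}
    (ht : 0 ≤ t) : eulerOp f s t = eulerOp g s t := by
  have h₁ : pd1 f s t = pd1 g s t := by
    simp only [pd1]; congr 1; exact funext fun x => h x t ht
  have h₂ : t * pd2 f s t = t * pd2 g s t := by
    rcases ht.eq_or_lt with rfl | ht
    · simp
    · exact congrArg _ (Filter.EventuallyEq.deriv_eq
        (eventually_of_mem (Ioi_mem_nhds ht) fun y hy => h s y (le_of_lt hy)))
  simp only [eulerOp, h₁, h₂]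

lemma eulerOp_Vpot_sq_sub_mul (θ c : ℝ) (hs : Smooth2 U) (s t : ℝ) :
    eulerOp (fun s t => (Vpot θ s t ^ 2 - c) * U s t) s t
      = 2 * Vpot θ s t ^ 2 * U s t + (Vpot θ s t ^ 2 - c) * eulerOp U s t := by
  have h₁ := (((hasDerivAt_Vpot_fst θ t s).fun_pow 2).sub_const c).fun_mul (hs.hasDerivAt_pd1 s t)
  have h₂ := (((hasDerivAt_Vpot_snd θ s t).fun_pow 2).sub_const c).fun_mul (hs.hasDerivAt_pd2 s t)
  simp only [eulerOp, pd1, pd2, h₁.deriv, h₂.deriv]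
  simp only [Vpot]
  push_cast
  ring

lemma pd1_pd1_eulerOp (hs : Smooth2 U) (s t : ℝ) :
    pd1 (pd1 (eulerOp U)) s t
      = 2 * pd1 (pd1 U) s t + s * pd1 (pd1 (pd1 U)) s t + t * pd1 (pd1 (pd2 U)) s t := by
  unfold eulerOp
  rw [pd1_add hs.pd1.fst_mul hs.pd2.snd_mul, pd1_fst_mul hs.pd1, pd1_snd_mul hs.pd2,
    pd1_add (hs.pd1.add hs.pd1.pd1.fst_mul) hs.pd2.pd1.snd_mul, pd1_add hs.pd1 hs.pd1.pd1.fst_mul,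
    pd1_fst_mul hs.pd1.pd1, pd1_snd_mul hs.pd2.pd1]
  ring

lemma pd2_pd2_eulerOp (hs : Smooth2 U) (s t : ℝ) :
    pd2 (pd2 (eulerOp U)) s t
      = 2 * pd2 (pd2 U) s t + s * pd2 (pd2 (pd1 U)) s t + t * pd2 (pd2 (pd2 U)) s t := by
  unfold eulerOp
  rw [pd2_add hs.pd1.fst_mul hs.pd2.snd_mul, pd2_fst_mul hs.pd1, pd2_snd_mul hs.pd2,
    pd2_add hs.pd1.pd2.fst_mul (hs.pd2.add hs.pd2.pd2.snd_mul), pd2_add hs.pd2 hs.pd2.pd2.snd_mul,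
    pd2_fst_mul hs.pd1.pd2, pd2_snd_mul hs.pd2.pd2]
  ring

/-- `[Hop θ, eulerOp] = -2Δ - 2V²`, since `V²` is homogeneous of degree two. -/
lemma hop_eulerOp (hU : IsModelEigen θ U σ₀) {s t : ℝ} (ht : 0 ≤ t) :
    Hop θ (eulerOp U) s t
      = σ₀ * eulerOp U s t + (2 * σ₀ - 4 * Vpot θ s t ^ 2) * U s t := by
  have hs : Smooth2 U := hU.smooth
  have hΔ : ∀ s t, 0 ≤ t → pd1 (pd1 U) s t + pd2 (pd2 U) s t = (Vpot θ s t ^ 2 - σ₀) * U s t :=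
    fun s t ht => by have := hU.eigen s t ht; simp only [Hop] at this; linarith
  have hE := eulerOp_congr hΔ (s := s) ht
  rw [eulerOp_Vpot_sq_sub_mul θ σ₀ hs, eulerOp, pd1_add hs.pd1.pd1 hs.pd2.pd2,
    pd2_add hs.pd1.pd1 hs.pd2.pd2] at hE
  have c₁ : pd1 (pd1 (pd2 U)) = pd2 (pd1 (pd1 U)) := by
    rw [hs.pd1_pd2_comm, hs.pd1.pd1_pd2_comm]
  have c₂ : pd2 (pd2 (pd1 U)) = pd1 (pd2 (pd2 U)) := by
    rw [← hs.pd1_pd2_comm, hs.pd2.pd1_pd2_comm]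
  simp only [Hop]
  rw [pd1_pd1_eulerOp hs, pd2_pd2_eulerOp hs, c₁, c₂]
  linear_combination (-2) * hΔ s t ht - hE

lemma IsModelEigen.virial (hU : IsModelEigen θ U σ₀) :
    intHalf (fun s t => Vpot θ s t ^ 2 * U s t ^ 2) = σ₀ / 2 := by
  have hUa := hU.schwartz.admissible hU.smooth
  have h₀ := hU.intHalf_mul_eq_zero (hU.schwartz.admissible_eulerOp hU.smooth)
    (pd2_eulerOp_of_neumann hU.smooth hU.neumann) fun s t ht => hop_eulerOp hU ht
  have hV := continuous_Vpot θ
  have i₁ := hUa.integrable_sq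
  have i₂ := hUa.integrable_mul_sq (w := fun s t => Vpot θ s t ^ 2) (by fun_prop)
    ((polyBounded_Vpot θ).pow 2)
  rw [intHalf_congr (g := fun s t => 2 * σ₀ * U s t ^ 2 - 4 * (Vpot θ s t ^ 2 * U s t ^ 2))
    fun s t _ => by ring] at h₀
  simp (disch := fun_prop) only [intHalf_sub, intHalf_const_mul] at h₀
  rw [hU.normalized] at h₀
  linarith

end ModelEigenfunction

section Scaling

variable {U q : ℝ → ℝ → ℝ}

/-- Integrating `q · U · eulerOp U = (1/2) q · eulerOp (U²)` by parts in `s` and in `t`;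
the boundary term at `t = 0` carries a factor `t`. -/
lemma intHalf_mul_mul_eulerOp_of_homogeneous (hU : Admissible U) (hq : Smooth2 q)
    (hqb : PolyBounded q) (hq₁ : PolyBounded (pd1 q)) (hq₂ : PolyBounded (pd2 q))
    (hEuler : ∀ s t, 0 < t → eulerOp q s t = 2 * q s t) :
    intHalf (fun s t => q s t * (U s t * eulerOp U s t))
      = -2 * intHalf (fun s t => q s t * U s t ^ 2) := by
  have hs := hU.smooth
  have := hs.continuous; have := hs.pd1.continuous; have := hs.pd2.continuous
  have := hq.continuous; have := hq.pd1.continuous; have := hq.pd2.continuous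
  have dUU := hU.decay.mul hU.decay
  have d₁ := (hU.decay_pd1.mul hU.decay).add (hU.decay.mul hU.decay_pd1)
  have d₂ := (hU.decay_pd2.mul hU.decay).add (hU.decay.mul hU.decay_pd2)
  have ibp₁ := intHalf_mul_pd1 hq.fst_mul (hs.mul hs)
    (by rw [pd1_fst_mul hq]; exact dUU.polyBounded_mul (hqb.add (polyBounded_fst.mul hq₁)))
    (by rw [pd1_mul hs hs]; exact d₁.polyBounded_mul (polyBounded_fst.mul hqb))
    (dUU.polyBounded_mul (polyBounded_fst.mul hqb))
  have ibp₂ := intHalf_mul_pd2 hq.snd_mul (hs.mul hs)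
    (by rw [pd2_snd_mul hq]; exact dUU.polyBounded_mul (hqb.add (polyBounded_snd.mul hq₂)))
    (by rw [pd2_mul hs hs]; exact d₂.polyBounded_mul (polyBounded_snd.mul hqb))
    (dUU.polyBounded_mul (polyBounded_snd.mul hqb)) (fun s => by simp)
  rw [pd1_fst_mul hq, pd1_mul hs hs] at ibp₁
  rw [pd2_snd_mul hq, pd2_mul hs hs] at ibp₂
  have i₁ := (d₁.polyBounded_mul (polyBounded_fst.mul hqb)).integrable (by fun_prop)
  have i₂ := (d₂.polyBounded_mul (polyBounded_snd.mul hqb)).integrable (by fun_prop)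
  have j₁ := (dUU.polyBounded_mul (hqb.add (polyBounded_fst.mul hq₁))).integrable (by fun_prop)
  have j₂ := (dUU.polyBounded_mul (hqb.add (polyBounded_snd.mul hq₂))).integrable (by fun_prop)
  have key : 2 * intHalf (fun s t => q s t * (U s t * eulerOp U s t))
      = -(4 * intHalf (fun s t => q s t * U s t ^ 2)) := by
    rw [← intHalf_const_mul, ← intHalf_const_mul]
    calc intHalf (fun s t => 2 * (q s t * (U s t * eulerOp U s t)))
        = intHalf (fun s t => s * q s t * (pd1 U s t * U s t + U s t * pd1 U s t)
            + t * q s t * (pd2 U s t * U s t + U s t * pd2 U s t)) :=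
          intHalf_congr fun s t _ => by unfold eulerOp; ring
      _ = -intHalf (fun s t => (q s t + s * pd1 q s t) * (U s t * U s t)
            + (q s t + t * pd2 q s t) * (U s t * U s t)) := by
          rw [intHalf_add i₁ i₂, ibp₁, ibp₂, intHalf_add j₁ j₂]; ring
      _ = -intHalf (fun s t => 4 * (q s t * U s t ^ 2)) := by
          refine congrArg _ (intHalf_congr fun s t ht => ?_)
          have := hEuler s t ht
          unfold eulerOp at this
          linear_combination U s t ^ 2 * this
  linarith

lemma pd1_linForm_mul_linForm (a b c d : ℝ) :
    pd1 (fun s t => (a * s + b * t) * (c * s + d * t))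
      = fun s t => a * (c * s + d * t) + (a * s + b * t) * c :=
  funext₂ fun s t => by
    simpa [pd1] using ((((hasDerivAt_id s).const_mul a).add_const (b * t)).fun_mul
      (((hasDerivAt_id s).const_mul c).add_const (d * t))).deriv

lemma pd2_linForm_mul_linForm (a b c d : ℝ) :
    pd2 (fun s t => (a * s + b * t) * (c * s + d * t))
      = fun s t => b * (c * s + d * t) + (a * s + b * t) * d :=
  funext₂ fun s t => by
    simpa [pd2] using ((((hasDerivAt_id t).const_mul b).const_add (a * s)).fun_mul
      (((hasDerivAt_id t).const_mul d).const_add (c * s))).deriv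

lemma polyBounded_linForm (a b : ℝ) : PolyBounded (fun s t => a * s + b * t) :=
  ((polyBounded_const a).mul polyBounded_fst).add ((polyBounded_const b).mul polyBounded_snd)

lemma intHalf_linForm_mul_linForm_mul_eulerOp (hU : Admissible U) (a b c d : ℝ) :
    intHalf (fun s t => (a * s + b * t) * (c * s + d * t) * (U s t * eulerOp U s t))
      = -2 * intHalf (fun s t => (a * s + b * t) * (c * s + d * t) * U s t ^ 2) := by
  refine intHalf_mul_mul_eulerOp_of_homogeneous hU (fun n => by fun_prop)
    ((polyBounded_linForm a b).mul (polyBounded_linForm c d)) ?_ ?_ fun s t _ => ?_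
  · rw [pd1_linForm_mul_linForm]
    exact ((polyBounded_const a).mul (polyBounded_linForm c d)).add
      ((polyBounded_linForm a b).mul (polyBounded_const c))
  · rw [pd2_linForm_mul_linForm]
    exact ((polyBounded_const b).mul (polyBounded_linForm c d)).add
      ((polyBounded_linForm a b).mul (polyBounded_const d))
  · simp only [eulerOp, pd1_linForm_mul_linForm, pd2_linForm_mul_linForm]
    ring

end Scaling

section Family

def Smooth3On (a b : ℝ) (v : ℝ → ℝ → ℝ → ℝ) : Prop :=
  ∀ n : ℕ, ContDiffOn ℝ n (fun p : ℝ × ℝ × ℝ => v p.1 p.2.1 p.2.2) (Ioo a b ×ˢ univ)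

variable {a b x : ℝ} {v : ℝ → ℝ → ℝ → ℝ}

lemma Smooth3On.differentiableAt (hv : Smooth3On a b v) (hx : x ∈ Ioo a b) (s t : ℝ) :
    DifferentiableAt ℝ (fun p : ℝ × ℝ × ℝ => v p.1 p.2.1 p.2.2) (x, s, t) :=
  ((hv 1).contDiffAt ((isOpen_Ioo.prod isOpen_univ).mem_nhds ⟨hx, mem_univ _⟩)).differentiableAt
    (by norm_num)

lemma Smooth3On.fderiv_apply (hv : Smooth3On a b v) (w : ℝ × ℝ × ℝ) :
    Smooth3On a b fun y s t => fderiv ℝ (fun p : ℝ × ℝ × ℝ => v p.1 p.2.1 p.2.2) (y, s, t) w :=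
  fun n => ((hv (n + 1)).fderiv_of_isOpen (isOpen_Ioo.prod isOpen_univ) (by norm_cast)).clm_apply
    contDiffOn_const

lemma Smooth3On.hasDerivAt_pdθ (hv : Smooth3On a b v) (hx : x ∈ Ioo a b) (s t : ℝ) :
    HasDerivAt (fun y => v y s t) (fderiv ℝ (fun p : ℝ × ℝ × ℝ => v p.1 p.2.1 p.2.2) (x, s, t)
      (1, 0, 0)) x :=
  (hv.differentiableAt hx s t).hasFDerivAt.comp_hasDerivAt (f := fun y : ℝ => (y, s, t)) x
    ((hasDerivAt_id x).prodMk (hasDerivAt_const x (s, t)))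

lemma Smooth3On.congr {w : ℝ → ℝ → ℝ → ℝ} (hv : Smooth3On a b v)
    (h : ∀ y ∈ Ioo a b, ∀ s t, w y s t = v y s t) : Smooth3On a b w :=
  fun n => (hv n).congr fun p hp => h p.1 hp.1 p.2.1 p.2.2

lemma Smooth3On.pd1 (hv : Smooth3On a b v) : Smooth3On a b fun y => pd1 (v y) :=
  (hv.fderiv_apply (0, 1, 0)).congr fun y hy s t =>
    ((hv.differentiableAt hy s t).hasFDerivAt.comp_hasDerivAt (f := fun s' : ℝ => (y, s', t)) s
      ((hasDerivAt_const s y).prodMk ((hasDerivAt_id s).prodMk (hasDerivAt_const s t)))).deriv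

lemma Smooth3On.pd2 (hv : Smooth3On a b v) : Smooth3On a b fun y => pd2 (v y) :=
  (hv.fderiv_apply (0, 0, 1)).congr fun y hy s t =>
    ((hv.differentiableAt hy s t).hasFDerivAt.comp_hasDerivAt (f := fun t' : ℝ => (y, s, t')) t
      ((hasDerivAt_const t y).prodMk ((hasDerivAt_const t s).prodMk (hasDerivAt_id t)))).deriv

lemma Smooth3On.smooth2 (hv : Smooth3On a b v) (hx : x ∈ Ioo a b) : Smooth2 (v x) := fun n => by
  rw [← contDiffOn_univ]
  exact (hv n).comp (contDiff_const.prodMk (contDiff_fst.prodMk contDiff_snd)).contDiffOn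
    fun _ _ => ⟨hx, mem_univ _⟩

lemma Smooth3On.smooth2_pdθ (hv : Smooth3On a b v) (hx : x ∈ Ioo a b) : Smooth2 (pdθ v x) := by
  have := (hv.fderiv_apply (1, 0, 0)).smooth2 hx
  rwa [show pdθ v x = _ from funext₂ fun s t => (hv.hasDerivAt_pdθ hx s t).deriv]

lemma Smooth3On.hasDerivAt_pd1 (hv : Smooth3On a b v) (hx : x ∈ Ioo a b) (s t : ℝ) :
    HasDerivAt (fun y => _root_.pd1 (v y) s t) (_root_.pd1 (pdθ v x) s t) x :=
  hasDerivAt_deriv_comm (F := fun y s' => v y s' t) (isOpen_Ioo.prod isOpen_univ)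
    ((hv 2).comp (contDiff_fst.prodMk (contDiff_snd.prodMk contDiff_const)).contDiffOn
      fun _ hq => ⟨hq.1, mem_univ _⟩) ⟨hx, mem_univ s⟩

lemma Smooth3On.hasDerivAt_pd2 (hv : Smooth3On a b v) (hx : x ∈ Ioo a b) (s t : ℝ) :
    HasDerivAt (fun y => _root_.pd2 (v y) s t) (_root_.pd2 (pdθ v x) s t) x :=
  hasDerivAt_deriv_comm (F := fun y t' => v y s t') (isOpen_Ioo.prod isOpen_univ)
    ((hv 2).comp (contDiff_fst.prodMk (contDiff_const.prodMk contDiff_snd)).contDiffOn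
      fun _ hq => ⟨hq.1, mem_univ _⟩) ⟨hx, mem_univ t⟩

lemma Smooth3On.hasDerivAt_pd1_pd1 (hv : Smooth3On a b v) (hx : x ∈ Ioo a b) (s t : ℝ) :
    HasDerivAt (fun y => _root_.pd1 (_root_.pd1 (v y)) s t)
      (_root_.pd1 (_root_.pd1 (pdθ v x)) s t) x := by
  have h := hv.pd1.hasDerivAt_pd1 hx s t
  rwa [show pdθ (fun y => _root_.pd1 (v y)) x = _root_.pd1 (pdθ v x) from
    funext₂ fun s t => (hv.hasDerivAt_pd1 hx s t).deriv] at h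

lemma Smooth3On.hasDerivAt_pd2_pd2 (hv : Smooth3On a b v) (hx : x ∈ Ioo a b) (s t : ℝ) :
    HasDerivAt (fun y => _root_.pd2 (_root_.pd2 (v y)) s t)
      (_root_.pd2 (_root_.pd2 (pdθ v x)) s t) x := by
  have h := hv.pd2.hasDerivAt_pd2 hx s t
  rwa [show pdθ (fun y => _root_.pd2 (v y)) x = _root_.pd2 (pdθ v x) from
    funext₂ fun s t => (hv.hasDerivAt_pd2 hx s t).deriv] at h

end Family

section SmoothFamily

variable {a b x : ℝ} {u : ℝ → ℝ → ℝ → ℝ} {σ : ℝ → ℝ}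

lemma IsSmoothFamily.smooth3On (h : IsSmoothFamily a b u σ) : Smooth3On a b u := h.smooth

lemma IsSmoothFamily.hasDerivAt_pdθ (h : IsSmoothFamily a b u σ) (hx : x ∈ Ioo a b) (s t : ℝ) :
    HasDerivAt (fun y => u y s t) (pdθ u x s t) x :=
  (h.smooth3On.hasDerivAt_pdθ hx s t).differentiableAt.hasDerivAt

lemma IsSmoothFamily.hasDerivAt_sigma (h : IsSmoothFamily a b u σ) (hx : x ∈ Ioo a b) :
    HasDerivAt σ (deriv σ x) x :=
  (((h.sigma_smooth 1).differentiableOn (by norm_num)).differentiableAt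
    (isOpen_Ioo.mem_nhds hx)).hasDerivAt

lemma IsSmoothFamily.hasDerivAt_deriv_sigma (h : IsSmoothFamily a b u σ) (hx : x ∈ Ioo a b) :
    HasDerivAt (deriv σ) (deriv (deriv σ) x) x := by
  have hσ' : ContDiffOn ℝ 1 (deriv σ) (Ioo a b) :=
    (h.sigma_smooth 2).deriv_of_isOpen isOpen_Ioo (by norm_num)
  exact ((hσ'.differentiableOn (by norm_num)).differentiableAt (isOpen_Ioo.mem_nhds hx)).hasDerivAt

lemma IsSmoothFamily.neumann_pdθ (h : IsSmoothFamily a b u σ) (hx : x ∈ Ioo a b) (s : ℝ) :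
    pd2 (pdθ u x) s 0 = 0 := by
  refine ((h.smooth3On.hasDerivAt_pd2 hx s 0).congr_of_eventuallyEq ?_).unique
    (hasDerivAt_const x 0)
  filter_upwards [isOpen_Ioo.mem_nhds hx] with y hy
  exact ((h.eigen y hy).neumann s).symm

lemma IsSmoothFamily.schwartzHalf_pdθ (h : IsSmoothFamily a b u σ) (hx : x ∈ Ioo a b) :
    SchwartzHalf (pdθ u x) := fun k l n => by
  obtain ⟨ε, hε, C, hC⟩ := h.schwartz x hx 1 k l n
  exact ⟨C, fun s t ht => by simpa using hC x hx (by simpa using hε) s t ht⟩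

lemma IsSmoothFamily.admissible_pdθ (h : IsSmoothFamily a b u σ) (hx : x ∈ Ioo a b) :
    Admissible (pdθ u x) :=
  (h.schwartzHalf_pdθ hx).admissible (h.smooth3On.smooth2_pdθ hx)

/-- The eigenvalue equation differentiated in `θ`. -/
lemma IsSmoothFamily.hop_pdθ (h : IsSmoothFamily a b u σ) (hx : x ∈ Ioo a b) {s t : ℝ}
    (ht : 0 ≤ t) :
    Hop x (pdθ u x) s t
      = σ x * pdθ u x s t + (deriv σ x - 2 * Vpot x s t * dVpot x s t) * u x s t := by
  have hu := h.hasDerivAt_pdθ hx s t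
  have hL := (((h.smooth3On.hasDerivAt_pd1_pd1 hx s t).fun_neg).fun_sub
    (h.smooth3On.hasDerivAt_pd2_pd2 hx s t)).fun_add
    (((hasDerivAt_Vpot s t x).fun_pow 2).fun_mul hu)
  have hev : (fun y => - pd1 (pd1 (u y)) s t - pd2 (pd2 (u y)) s t + Vpot y s t ^ 2 * u y s t)
      =ᶠ[𝓝 x] fun y => σ y * u y s t := by
    filter_upwards [isOpen_Ioo.mem_nhds hx] with y hy
    simpa [Hop] using (h.eigen y hy).eigen s t ht
  have := (hL.congr_of_eventuallyEq hev.symm).unique ((h.hasDerivAt_sigma hx).fun_mul hu)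
  simp only [Hop]
  push_cast at this
  linear_combination this

lemma IsSmoothFamily.feynman_hellmann (h : IsSmoothFamily a b u σ) (hx : x ∈ Ioo a b) :
    intHalf (fun s t => Vpot x s t * dVpot x s t * u x s t ^ 2) = deriv σ x / 2 := by
  have hU := h.eigen x hx
  have hUa := hU.schwartz.admissible hU.smooth
  have h₀ := hU.intHalf_mul_eq_zero (h.admissible_pdθ hx) (h.neumann_pdθ hx)
    fun s t ht => h.hop_pdθ hx ht
  have := continuous_Vpot x; have := continuous_dVpot x
  have i₁ := hUa.integrable_sq
  have i₂ := hUa.integrable_mul_sq (w := fun s t => Vpot x s t * dVpot x s t) (by fun_prop)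
    ((polyBounded_Vpot x).mul (polyBounded_dVpot x))
  rw [intHalf_congr (g := fun s t => deriv σ x * u x s t ^ 2
    - 2 * (Vpot x s t * dVpot x s t * u x s t ^ 2)) fun s t _ => by ring] at h₀
  simp (disch := fun_prop) only [intHalf_sub, intHalf_const_mul] at h₀
  rw [hU.normalized] at h₀
  linarith

end SmoothFamily

section ParametricIntegral

lemma le_inv_sq_mul_inv_sq_of_le {f : ℝ → ℝ → ℝ} {C : ℝ}
    (h : ∀ s t, 0 ≤ t → |f s t| ≤ C * ((1 + |s| + t) ^ 4)⁻¹) (s t : ℝ) (ht : 0 ≤ t) :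
    |f s t| ≤ C * ((1 + s ^ 2)⁻¹ * (1 + t ^ 2)⁻¹) := by
  have hC : 0 ≤ C := by simpa using (abs_nonneg _).trans (h 0 0 le_rfl)
  exact (h s t ht).trans (mul_le_mul_of_nonneg_left (inv_pow_four_le ht) hC)

lemma hasDerivAt_intHalf {F F' : ℝ → ℝ → ℝ → ℝ} {θ ε C₀ C : ℝ} (hε : 0 < ε)
    (hF_cont : ∀ x, |x - θ| < ε → Continuous (fun p : ℝ × ℝ => F x p.1 p.2))
    (hF'_cont : Continuous (fun p : ℝ × ℝ => F' θ p.1 p.2))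
    (hF_le : ∀ x, |x - θ| < ε → ∀ s t, 0 ≤ t → |F x s t| ≤ C₀ * ((1 + |s| + t) ^ 4)⁻¹)
    (hF'_le : ∀ x, |x - θ| < ε → ∀ s t, 0 ≤ t → |F' x s t| ≤ C * ((1 + |s| + t) ^ 4)⁻¹)
    (hderiv : ∀ x, |x - θ| < ε → ∀ s t, 0 ≤ t → HasDerivAt (fun y => F y s t) (F' x s t) x) :
    HasDerivAt (fun x => intHalf (F x)) (intHalf (F' θ)) θ := by
  have hball : ∀ x ∈ Metric.ball θ ε, |x - θ| < ε := fun x hx => by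
    simpa [Real.dist_eq] using hx
  have hint : ∀ x ∈ Metric.ball θ ε, Integrable (fun p : ℝ × ℝ => F x p.1 p.2) halfPlaneVolume :=
    fun x hx => integrable_of_le_inv_sq (hF_cont x (hball x hx))
      (le_inv_sq_mul_inv_sq_of_le (hF_le x (hball x hx)))
  have hθ : θ ∈ Metric.ball θ ε := Metric.mem_ball_self hε
  obtain ⟨hF'_int, hd⟩ := hasDerivAt_integral_of_dominated_loc_of_deriv_le (μ := halfPlaneVolume)
    (F := fun x (p : ℝ × ℝ) => F x p.1 p.2) (F' := fun x (p : ℝ × ℝ) => F' x p.1 p.2)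
    (bound := fun p => C * ((1 + p.1 ^ 2)⁻¹ * (1 + p.2 ^ 2)⁻¹)) (Metric.ball_mem_nhds θ hε)
    (eventually_of_mem (Metric.ball_mem_nhds θ hε) fun x hx => (hint x hx).aestronglyMeasurable)
    (hint θ hθ) hF'_cont.aestronglyMeasurable
    (by filter_upwards [ae_halfPlaneVolume_snd_pos] with p hp x hx
        using le_inv_sq_mul_inv_sq_of_le (hF'_le x (hball x hx)) p.1 p.2 hp.le)
    (integrable_inv_sq_mul_inv_sq.const_mul C)
    (by filter_upwards [ae_halfPlaneVolume_snd_pos] with p hp x hx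
        using hderiv x (hball x hx) p.1 p.2 hp.le)
  rw [intHalf_eq_integral hF'_int]
  exact hd.congr_of_eventuallyEq (eventually_of_mem (Metric.ball_mem_nhds θ hε)
    fun x hx => intHalf_eq_integral (hint x hx))

lemma abs_mul_mul_le_of_le {X C D p f g : ℝ} (hX : 0 < X) (hp : |p| ≤ C * X ^ 2)
    (hf : |f| ≤ D * (X ^ 3)⁻¹) (hg : |g| ≤ D * (X ^ 3)⁻¹) :
    |p * (f * g)| ≤ C * D ^ 2 * (X ^ 4)⁻¹ := by
  rw [abs_mul, abs_mul]
  calc |p| * (|f| * |g|) ≤ C * X ^ 2 * (D * (X ^ 3)⁻¹ * (D * (X ^ 3)⁻¹)) :=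
        mul_le_mul hp (mul_le_mul hf hg (abs_nonneg _) ((abs_nonneg _).trans hf)) (by positivity)
          ((abs_nonneg _).trans hp)
    _ = C * D ^ 2 * (X ^ 4)⁻¹ := by field_simp

lemma abs_mul_le_sq_of_le {X p q : ℝ} (hp : |p| ≤ X) (hq : |q| ≤ X) : |p * q| ≤ X ^ 2 := by
  rw [abs_mul, sq]
  exact mul_le_mul hp hq (abs_nonneg _) ((abs_nonneg _).trans hp)

variable {a b θ : ℝ} {u : ℝ → ℝ → ℝ → ℝ} {σ : ℝ → ℝ}

lemma IsSmoothFamily.exists_uniform_bound (h : IsSmoothFamily a b u σ) (hθ : θ ∈ Ioo a b) :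
    ∃ ε > 0, ∃ D : ℝ, ∀ x, |x - θ| < ε → x ∈ Ioo a b ∧ ∀ s t, 0 ≤ t →
      |u x s t| ≤ D * ((1 + |s| + t) ^ 3)⁻¹ ∧ |pdθ u x s t| ≤ D * ((1 + |s| + t) ^ 3)⁻¹ := by
  obtain ⟨δ, hδ, hball⟩ := Metric.isOpen_iff.mp isOpen_Ioo θ hθ
  obtain ⟨ε₀, hε₀, C₀, h₀⟩ := h.schwartz θ hθ 0 0 0 3
  obtain ⟨ε₁, hε₁, C₁, h₁⟩ := h.schwartz θ hθ 1 0 0 3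
  refine ⟨min δ (min ε₀ ε₁), by positivity, max C₀ C₁, fun x hx => ?_⟩
  have hxI : x ∈ Ioo a b := hball (by simpa [Real.dist_eq] using hx.trans_le (min_le_left _ _))
  have hx₀ : |x - θ| < ε₀ := hx.trans_le ((min_le_right _ _).trans (min_le_left _ _))
  have hx₁ : |x - θ| < ε₁ := hx.trans_le ((min_le_right _ _).trans (min_le_right _ _))
  refine ⟨hxI, fun s t ht => ⟨?_, ?_⟩⟩
  · have := h₀ x hxI hx₀ s t ht
    rw [rpow_neg (by positivity), rpow_natCast] at this
    simpa using this.trans (mul_le_mul_of_nonneg_right (le_max_left _ _) (by positivity))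
  · have := h₁ x hxI hx₁ s t ht
    rw [rpow_neg (by positivity), rpow_natCast] at this
    simpa using this.trans (mul_le_mul_of_nonneg_right (le_max_right _ _) (by positivity))

lemma IsSmoothFamily.hasDerivAt_intHalf_mul_sq (h : IsSmoothFamily a b u σ) (hθ : θ ∈ Ioo a b)
    {P P' : ℝ → ℝ → ℝ → ℝ} {C : ℝ}
    (hP : ∀ x s t, HasDerivAt (fun y => P y s t) (P' x s t) x)
    (hP_cont : ∀ x, Continuous (fun p : ℝ × ℝ => P x p.1 p.2))
    (hP'_cont : Continuous (fun p : ℝ × ℝ => P' θ p.1 p.2))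
    (hP_le : ∀ x s t, 0 ≤ t → |P x s t| ≤ C * (1 + |s| + t) ^ 2)
    (hP'_le : ∀ x s t, 0 ≤ t → |P' x s t| ≤ C * (1 + |s| + t) ^ 2) :
    HasDerivAt (fun x => intHalf (fun s t => P x s t * u x s t ^ 2))
      (intHalf (fun s t => P' θ s t * u θ s t ^ 2
        + 2 * (P θ s t * (u θ s t * pdθ u θ s t)))) θ := by
  obtain ⟨ε, hε, D, hD⟩ := h.exists_uniform_bound hθ
  have hX : ∀ s t : ℝ, 0 ≤ t → 0 < 1 + |s| + t := fun s t ht => by positivity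
  refine hasDerivAt_intHalf (F := fun x s t => P x s t * u x s t ^ 2)
    (F' := fun x s t => P' x s t * u x s t ^ 2 + 2 * (P x s t * (u x s t * pdθ u x s t)))
    (C₀ := C * D ^ 2) (C := 3 * (C * D ^ 2)) hε (fun x hx => ?_) ?_
    (fun x hx s t ht => ?_) (fun x hx s t ht => ?_) (fun x hx s t _ => ?_)
  · have := Smooth2.continuous (h.eigen x (hD x hx).1).smooth
    have := hP_cont x
    fun_prop
  · have := Smooth2.continuous (h.eigen θ hθ).smooth
    have := (h.smooth3On.smooth2_pdθ hθ).continuous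
    have := hP_cont θ
    fun_prop
  · obtain ⟨hu, -⟩ := (hD x hx).2 s t ht
    rw [sq (u x s t)]
    exact abs_mul_mul_le_of_le (hX s t ht) (hP_le x s t ht) hu hu
  · obtain ⟨hu, hw⟩ := (hD x hx).2 s t ht
    calc |P' x s t * u x s t ^ 2 + 2 * (P x s t * (u x s t * pdθ u x s t))|
        ≤ |P' x s t * (u x s t * u x s t)| + 2 * |P x s t * (u x s t * pdθ u x s t)| :=
          (abs_add_le _ _).trans_eq (by rw [sq, abs_mul 2, abs_two])
      _ ≤ C * D ^ 2 * ((1 + |s| + t) ^ 4)⁻¹ + 2 * (C * D ^ 2 * ((1 + |s| + t) ^ 4)⁻¹) := by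
          gcongr
          · exact abs_mul_mul_le_of_le (hX s t ht) (hP'_le x s t ht) hu hu
          · exact abs_mul_mul_le_of_le (hX s t ht) (hP_le x s t ht) hu hw
      _ = 3 * (C * D ^ 2) * ((1 + |s| + t) ^ 4)⁻¹ := by ring
  · exact ((hP x s t).fun_mul ((h.hasDerivAt_pdθ (hD x hx).1 s t).fun_pow 2)).congr_deriv
      (by push_cast; ring)

lemma IsSmoothFamily.intHalf_Vpot_sq_mul_pdθ (h : IsSmoothFamily a b u σ) (hθ : θ ∈ Ioo a b) :
    intHalf (fun s t => Vpot θ s t ^ 2 * (u θ s t * pdθ u θ s t)) = -deriv σ θ / 4 := by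
  have hU := h.eigen θ hθ
  have hUa := hU.schwartz.admissible hU.smooth
  have := continuous_Vpot θ; have := continuous_dVpot θ
  have hD := h.hasDerivAt_intHalf_mul_sq hθ (P := fun x s t => Vpot x s t ^ 2)
    (P' := fun x s t => 2 * (Vpot x s t * dVpot x s t)) (C := 2)
    (fun x s t => ((hasDerivAt_Vpot s t x).fun_pow 2).congr_deriv (by push_cast; ring))
    (fun x => by have := continuous_Vpot x; fun_prop) (by fun_prop)
    (fun x s t ht => by
      have := abs_mul_le_sq_of_le (abs_Vpot_le x (s := s) ht) (abs_Vpot_le x (s := s) ht)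
      rw [sq (Vpot x s t)]; nlinarith [sq_nonneg (1 + |s| + t)])
    (fun x s t ht => by
      rw [abs_mul, abs_two]
      gcongr; exact abs_mul_le_sq_of_le (abs_Vpot_le x (s := s) ht) (abs_dVpot_le x (s := s) ht))
  have hvir : HasDerivAt (fun x => intHalf (fun s t => Vpot x s t ^ 2 * u x s t ^ 2))
      (deriv σ θ / 2) θ :=
    ((h.hasDerivAt_sigma hθ).div_const 2).congr_of_eventuallyEq
      (eventually_of_mem (isOpen_Ioo.mem_nhds hθ) fun x hx => (h.eigen x hx).virial)
  have key := hD.unique hvir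
  have i₁ := hUa.integrable_mul_sq (w := fun s t => Vpot θ s t * dVpot θ s t) (by fun_prop)
    ((polyBounded_Vpot θ).mul (polyBounded_dVpot θ))
  have i₂ := hUa.integrable_mul (h.admissible_pdθ hθ) (w := fun s t => Vpot θ s t ^ 2)
    (by fun_prop) ((polyBounded_Vpot θ).pow 2)
  rw [intHalf_congr (g := fun s t => 2 * (Vpot θ s t * dVpot θ s t * u θ s t ^ 2)
    + 2 * (Vpot θ s t ^ 2 * (u θ s t * pdθ u θ s t))) fun s t _ => by ring] at key
  simp (disch := fun_prop) only [intHalf_add, intHalf_const_mul] at key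
  rw [h.feynman_hellmann hθ] at key
  linarith

lemma IsSmoothFamily.deriv_deriv_sigma_eq (h : IsSmoothFamily a b u σ) (hθ : θ ∈ Ioo a b) :
    deriv (deriv σ) θ = 2 * intHalf (fun s t => dVpot θ s t ^ 2 * u θ s t ^ 2)
      - 2 * intHalf (fun s t => Vpot θ s t ^ 2 * u θ s t ^ 2)
      + 4 * intHalf (fun s t => Vpot θ s t * dVpot θ s t * (u θ s t * pdθ u θ s t)) := by
  have hU := h.eigen θ hθ
  have hUa := hU.schwartz.admissible hU.smooth
  have := continuous_Vpot θ; have := continuous_dVpot θ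
  have hD := h.hasDerivAt_intHalf_mul_sq hθ (P := fun x s t => Vpot x s t * dVpot x s t)
    (P' := fun x s t => dVpot x s t ^ 2 - Vpot x s t ^ 2) (C := 2)
    (fun x s t => ((hasDerivAt_Vpot s t x).fun_mul (hasDerivAt_dVpot s t x)).congr_deriv
      (by ring))
    (fun x => by have := continuous_Vpot x; have := continuous_dVpot x; fun_prop) (by fun_prop)
    (fun x s t ht => by
      have := abs_mul_le_sq_of_le (abs_Vpot_le x (s := s) ht) (abs_dVpot_le x (s := s) ht)
      nlinarith [sq_nonneg (1 + |s| + t)])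
    (fun x s t ht => by
      have h₁ := abs_mul_le_sq_of_le (abs_dVpot_le x (s := s) ht) (abs_dVpot_le x (s := s) ht)
      have h₂ := abs_mul_le_sq_of_le (abs_Vpot_le x (s := s) ht) (abs_Vpot_le x (s := s) ht)
      rw [sq (dVpot x s t), sq (Vpot x s t)]
      linarith [abs_sub (dVpot x s t * dVpot x s t) (Vpot x s t * Vpot x s t)])
  have hFH : HasDerivAt (fun x => intHalf (fun s t => Vpot x s t * dVpot x s t * u x s t ^ 2))
      (deriv (deriv σ) θ / 2) θ :=
    ((h.hasDerivAt_deriv_sigma hθ).div_const 2).congr_of_eventuallyEq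
      (eventually_of_mem (isOpen_Ioo.mem_nhds hθ) fun x hx => h.feynman_hellmann hx)
  have key := hD.unique hFH
  have i₁ := hUa.integrable_mul_sq (w := fun s t => dVpot θ s t ^ 2) (by fun_prop)
    ((polyBounded_dVpot θ).pow 2)
  have i₂ := hUa.integrable_mul_sq (w := fun s t => Vpot θ s t ^ 2) (by fun_prop)
    ((polyBounded_Vpot θ).pow 2)
  have i₃ := hUa.integrable_mul (h.admissible_pdθ hθ) (w := fun s t => Vpot θ s t * dVpot θ s t)
    (by fun_prop) ((polyBounded_Vpot θ).mul (polyBounded_dVpot θ))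
  rw [intHalf_congr (g := fun s t => dVpot θ s t ^ 2 * u θ s t ^ 2 - Vpot θ s t ^ 2 * u θ s t ^ 2
    + 2 * (Vpot θ s t * dVpot θ s t * (u θ s t * pdθ u θ s t))) fun s t _ => by ring] at key
  simp (disch := fun_prop) only [intHalf_add, intHalf_sub, intHalf_const_mul] at key
  linarith

end ParametricIntegral

section Identities

lemma IsModelEigen.intHalf_Vpot_sq_mul_eulerOp {θ σ₀ : ℝ} {U : ℝ → ℝ → ℝ}
    (hU : IsModelEigen θ U σ₀) :
    intHalf (fun s t => Vpot θ s t ^ 2 * (U s t * eulerOp U s t)) = -σ₀ := by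
  have hV : ∀ s t, (-sin θ * s + cos θ * t) * (-sin θ * s + cos θ * t) = Vpot θ s t ^ 2 :=
    fun s t => by simp only [Vpot]; ring
  have := intHalf_linForm_mul_linForm_mul_eulerOp (hU.schwartz.admissible hU.smooth)
    (-sin θ) (cos θ) (-sin θ) (cos θ)
  simp only [hV] at this
  rw [this, hU.virial]
  ring

variable {a b θ : ℝ} {u : ℝ → ℝ → ℝ → ℝ} {σ : ℝ → ℝ}

lemma IsSmoothFamily.intHalf_Vpot_mul_dVpot_mul_eulerOp (h : IsSmoothFamily a b u σ)
    (hθ : θ ∈ Ioo a b) :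
    intHalf (fun s t => Vpot θ s t * dVpot θ s t * (u θ s t * eulerOp (u θ) s t)) = -deriv σ θ := by
  have hU := h.eigen θ hθ
  have hV : ∀ s t, (-sin θ * s + cos θ * t) * (-cos θ * s + -sin θ * t)
      = Vpot θ s t * dVpot θ s t := fun s t => by simp only [Vpot, dVpot]; ring
  have := intHalf_linForm_mul_linForm_mul_eulerOp (hU.schwartz.admissible hU.smooth)
    (-sin θ) (cos θ) (-cos θ) (-sin θ)
  simp only [hV] at this
  rw [this, h.feynman_hellmann hθ]
  ring

lemma IsSmoothFamily.intHalf_weight_mul_w0_mul (h : IsSmoothFamily a b u σ) (hθ : θ ∈ Ioo a b) :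
    intHalf (fun s t =>
        (2 * deriv σ θ * Vpot θ s t ^ 2 - 2 * σ θ * Vpot θ s t * dVpot θ s t)
          * (-(deriv σ θ / 2) * eulerOp (u θ) s t - σ θ * pdθ u θ s t) * u θ s t)
      = σ θ * deriv σ θ ^ 2 / 2
        + 2 * σ θ ^ 2
          * intHalf (fun s t => Vpot θ s t * dVpot θ s t * (u θ s t * pdθ u θ s t)) := by
  have hU := h.eigen θ hθ
  have hUa := hU.schwartz.admissible hU.smooth
  have hAa := hU.schwartz.admissible_eulerOp hU.smooth
  have hWa := h.admissible_pdθ hθ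
  have := continuous_Vpot θ; have := continuous_dVpot θ
  have i₁ := hUa.integrable_mul hAa (w := fun s t => Vpot θ s t ^ 2) (by fun_prop)
    ((polyBounded_Vpot θ).pow 2)
  have i₂ := hUa.integrable_mul hAa (w := fun s t => Vpot θ s t * dVpot θ s t) (by fun_prop)
    ((polyBounded_Vpot θ).mul (polyBounded_dVpot θ))
  have i₃ := hUa.integrable_mul hWa (w := fun s t => Vpot θ s t ^ 2) (by fun_prop)
    ((polyBounded_Vpot θ).pow 2)
  have i₄ := hUa.integrable_mul hWa (w := fun s t => Vpot θ s t * dVpot θ s t) (by fun_prop)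
    ((polyBounded_Vpot θ).mul (polyBounded_dVpot θ))
  rw [intHalf_congr (g := fun s t =>
      -deriv σ θ ^ 2 * (Vpot θ s t ^ 2 * (u θ s t * eulerOp (u θ) s t))
      + σ θ * deriv σ θ * (Vpot θ s t * dVpot θ s t * (u θ s t * eulerOp (u θ) s t))
      - 2 * σ θ * deriv σ θ * (Vpot θ s t ^ 2 * (u θ s t * pdθ u θ s t))
      + 2 * σ θ ^ 2 * (Vpot θ s t * dVpot θ s t * (u θ s t * pdθ u θ s t)))
    fun s t _ => by ring]
  simp (disch := fun_prop) only [intHalf_add, intHalf_sub, intHalf_const_mul]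
  rw [hU.intHalf_Vpot_sq_mul_eulerOp, h.intHalf_Vpot_mul_dVpot_mul_eulerOp hθ,
    h.intHalf_Vpot_sq_mul_pdθ hθ]
  ring

lemma IsSmoothFamily.intHalf_weight_sq_mul_sq (h : IsSmoothFamily a b u σ) (hθ : θ ∈ Ioo a b) :
    intHalf (fun s t => (σ θ * dVpot θ s t - deriv σ θ * Vpot θ s t) ^ 2 * u θ s t ^ 2)
      = (σ θ ^ 2 * deriv (deriv σ) θ + σ θ ^ 3 - σ θ * deriv σ θ ^ 2) / 2
        - 2 * σ θ ^ 2
          * intHalf (fun s t => Vpot θ s t * dVpot θ s t * (u θ s t * pdθ u θ s t)) := by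
  have hU := h.eigen θ hθ
  have hUa := hU.schwartz.admissible hU.smooth
  have := continuous_Vpot θ; have := continuous_dVpot θ
  have i₁ := hUa.integrable_mul_sq (w := fun s t => dVpot θ s t ^ 2) (by fun_prop)
    ((polyBounded_dVpot θ).pow 2)
  have i₂ := hUa.integrable_mul_sq (w := fun s t => Vpot θ s t * dVpot θ s t) (by fun_prop)
    ((polyBounded_Vpot θ).mul (polyBounded_dVpot θ))
  have i₃ := hUa.integrable_mul_sq (w := fun s t => Vpot θ s t ^ 2) (by fun_prop)
    ((polyBounded_Vpot θ).pow 2)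
  rw [intHalf_congr (g := fun s t => σ θ ^ 2 * (dVpot θ s t ^ 2 * u θ s t ^ 2)
      - 2 * σ θ * deriv σ θ * (Vpot θ s t * dVpot θ s t * u θ s t ^ 2)
      + deriv σ θ ^ 2 * (Vpot θ s t ^ 2 * u θ s t ^ 2))
    fun s t _ => by ring]
  simp (disch := fun_prop) only [intHalf_add, intHalf_sub, intHalf_const_mul]
  rw [h.feynman_hellmann hθ, hU.virial, h.deriv_deriv_sigma_eq hθ, hU.virial]
  ring

end Identities

/-- Lemma 2.10: with `w₀ = −(σ'/2)(s∂_s u_θ + t∂_t u_θ) − σ ∂_θ u_θ`,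
`∫ (2σ'V_θ² − 2σV_θ ∂_θV_θ) w₀ u_θ + ∫ (σ∂_θV_θ − σ'V_θ)² u_θ² = (σ²σ'' + σ³)/2`. -/
theorem w0_identity (a b : ℝ) (u : ℝ → ℝ → ℝ → ℝ) (σ : ℝ → ℝ)
    (h : IsSmoothFamily a b u σ) (θ : ℝ) (hθ : θ ∈ Set.Ioo a b)
    (w₀ : ℝ → ℝ → ℝ)
    (hw₀ : ∀ s t : ℝ, w₀ s t =
      - (deriv σ θ / 2) * (s * pd1 (u θ) s t + t * pd2 (u θ) s t) - σ θ * pdθ u θ s t) :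
    intHalf (fun s t =>
        (2 * deriv σ θ * (Vpot θ s t)^2 -
          2 * σ θ * Vpot θ s t * (- t * Real.sin θ - s * Real.cos θ)) * w₀ s t * u θ s t) +
      intHalf (fun s t =>
        (σ θ * (- t * Real.sin θ - s * Real.cos θ) - deriv σ θ * Vpot θ s t)^2 * (u θ s t)^2)
      = ((σ θ)^2 * deriv (deriv σ) θ + (σ θ)^3) / 2 := by
  simp only [hw₀]
  exact (congrArg₂ (· + ·) (h.intHalf_weight_mul_w0_mul hθ) (h.intHalf_weight_sq_mul_sq hθ)).trans
    (by ring)
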